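/- arXiv:2602.22414 — 5 statements merged into one kernel-verified Lean document; each statement's English description precedes it below -/
import Mathlib

section
/- For all integers a, b, c, d such that b and d are coprime, there exists an integer x such that a + b·x and c + d·x are coprime. -/
/-! If `u * b + v * d = 1`, then `(u + d) * (a + b * x) + (v - b) * (c + d * x)` equals
`x + (u * a + v * c + a * d - b * c)`, so it is `1` for a suitable `x`. -/

theorem IsCoprime.exists_isCoprime_add_mul {R : Type*} [CommRing R] {b d : R}
    (h : IsCoprime b d) (a c : R) : ∃ x : R, IsCoprime (a + b * x) (c + d * x) := by
  obtain ⟨u, v, huv⟩ := h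
  set x := 1 + b * c - a * d - (u * a + v * c)
  exact ⟨x, u + d, v - b, by linear_combination x * huv⟩

theorem exists_coprime_shift (a b c d : ℤ) (h : IsCoprime b d) :
    ∃ x : ℤ, IsCoprime (a + b * x) (c + d * x) :=
  h.exists_isCoprime_add_mul a c
end

section
/- Let a, b, c, d, s, t, x be integers with b·s + d·t = 1. Then a + b·x and c + d·x are coprime if and only if d·a − b·c and s·a + t·c + x are coprime. -/
/-!
The matrix `!![d, -b; s, t]` has determinant `b * s + d * t = 1` and sends the pair
`(a + b * x, c + d * x)` to `(d * a - b * c, s * a + t * c + x)`. A change of generators by a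
matrix of determinant one does not change the ideal they generate, so one pair is coprime iff
the other is.
-/

section

variable {R : Type*} [CommRing R]

theorem IsCoprime.of_mul_add_mul {u v : R} (m n p q : R)
    (h : IsCoprime (m * u + n * v) (p * u + q * v)) : IsCoprime u v := by
  obtain ⟨α, β, hαβ⟩ := h
  exact ⟨α * m + β * p, α * n + β * q, by linear_combination hαβ⟩

theorem isCoprime_mul_add_mul_iff {m n p q : R} (hdet : m * q - n * p = 1) (u v : R) :
    IsCoprime (m * u + n * v) (p * u + q * v) ↔ IsCoprime u v := by
  refine ⟨IsCoprime.of_mul_add_mul m n p q, fun huv => ?_⟩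
  -- the adjugate matrix inverts the change of generators
  apply IsCoprime.of_mul_add_mul q (-n) (-p) m
  convert huv using 1
  · linear_combination u * hdet
  · linear_combination v * hdet

end

theorem coprime_shift_iff (a b c d s t x : ℤ) (h : b * s + d * t = 1) :
    IsCoprime (a + b * x) (c + d * x) ↔
      IsCoprime (d * a - b * c) (s * a + t * c + x) := by
  have hdet : d * t - -b * s = 1 := by linear_combination h
  have hfirst : d * (a + b * x) + -b * (c + d * x) = d * a - b * c := by ring
  have hsecond : s * (a + b * x) + t * (c + d * x) = s * a + t * c + x := by
    linear_combination x * h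
  rw [← isCoprime_mul_add_mul_iff hdet, hfirst, hsecond]
end

section
/- Let n ≥ 8 and k ≥ 1 be natural numbers, let M be an n×n integer matrix with det M ≠ 0 whose entries all have absolute value at most k, let c ≥ 1 be a natural number, and let A be an n×n integer matrix such that every column of A contains at most one nonzero entry and every entry of A has absolute value at most n²·(log(2nk))² + (log c)². Then for every vector u ∈ ℝⁿ with Euclidean norm ‖u‖ = 1, one has 1 − β ≤ ‖(Iₙ + (1/(c·det M))·M·A)·u‖ ≤ 1 + β, where β = (k·n⁴·(log(2nk))² + k·n²·(log c)²) / (c·|det M|) and ‖·‖ is the Euclidean (ℓ₂) norm on ℝⁿ. -/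
/-!
Put `D = n² log²(2nk) + log² c` and `B = M * A`. Each column of `A` has at most one nonzero
entry, so each entry of `B` is a single product `M i l * A l j`, whence `|B i j| ≤ k D`.
Cauchy–Schwarz on every row gives `‖B u‖ ≤ n k D ≤ n² k D` for a unit vector `u`, and the
reverse triangle inequality gives `|‖u + s B u‖ - 1| ≤ |s| ‖B u‖` with `s = (c det M)⁻¹`;
finally `|s| n² k D` is exactly the `β` of the statement.
-/

open Matrix WithLp

namespace Matrix

theorem abs_mul_apply_le_of_subsingleton_support {l m n R : Type*} [Fintype m] [CommRing R]
    [LinearOrder R] [IsStrictOrderedRing R] {a d : R} (M : Matrix l m R) (A : Matrix m n R)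
    (i : l) (j : n) (hM : ∀ k, |M i k| ≤ a) (hA : ∀ k, |A k j| ≤ d)
    (hcol : (Function.support fun k => A k j).Subsingleton) (ha : 0 ≤ a) (hd : 0 ≤ d) :
    |(M * A) i j| ≤ a * d := by
  rcases hcol.eq_empty_or_singleton with hzero | ⟨k, hk⟩
  · have hcol_zero : ∀ k, A k j = 0 := fun k =>
      congrFun (Function.support_eq_empty_iff.mp hzero) k
    simp only [mul_apply, hcol_zero, mul_zero, Finset.sum_const_zero, abs_zero]
    positivity
  · have hsingle : (M * A) i j = M i k * A k j := by
      refine Finset.sum_eq_single k (fun k' _ hk' => ?_) (by simp)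
      change M i k' * A k' j = 0
      rw [Function.notMem_support.mp (hk ▸ hk' : k' ∉ Function.support fun k => A k j), mul_zero]
    rw [hsingle, abs_mul]
    exact mul_le_mul (hM k) (hA k) (abs_nonneg _) ha

theorem norm_toLp_mulVec_sq_le_of_abs_le {m n : Type*} [Fintype m] [Fintype n]
    (B : Matrix m n ℝ) {b : ℝ} (hB : ∀ i j, |B i j| ≤ b) (x : EuclideanSpace ℝ n) :
    ‖toLp 2 (B *ᵥ x.ofLp)‖ ^ 2 ≤ Fintype.card m * Fintype.card n * b ^ 2 * ‖x‖ ^ 2 := by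
  have hrow : ∀ i, ∑ j, B i j ^ 2 ≤ Fintype.card n * b ^ 2 := fun i => by
    calc ∑ j, B i j ^ 2 ≤ ∑ _j : n, b ^ 2 :=
          Finset.sum_le_sum fun j _ => sq_le_sq.2 ((hB i j).trans (le_abs_self b))
      _ = _ := by simp
  simp only [EuclideanSpace.norm_sq_eq, Real.norm_eq_abs, sq_abs]
  calc ∑ i, (B *ᵥ x.ofLp) i ^ 2 ≤ ∑ i : m, (∑ j, B i j ^ 2) * ∑ j, x.ofLp j ^ 2 :=
        Finset.sum_le_sum fun i _ => Finset.sum_mul_sq_le_sq_mul_sq _ _ _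
    _ ≤ ∑ i : m, Fintype.card n * b ^ 2 * ∑ j, x.ofLp j ^ 2 :=
        Finset.sum_le_sum fun i _ => by gcongr; exact hrow i
    _ = _ := by simp [mul_assoc]

theorem abs_norm_toLp_one_add_smul_mulVec_sub_norm_le {n 𝕜 : Type*} [Fintype n] [DecidableEq n]
    [RCLike 𝕜] (B : Matrix n n 𝕜) (s : 𝕜) (u : EuclideanSpace 𝕜 n) :
    |‖toLp 2 ((1 + s • B) *ᵥ u.ofLp)‖ - ‖u‖| ≤ ‖s‖ * ‖toLp 2 (B *ᵥ u.ofLp)‖ := by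
  have hsub : toLp 2 ((1 + s • B) *ᵥ u.ofLp) - u = s • toLp 2 (B *ᵥ u.ofLp) := by
    rw [add_mulVec, one_mulVec, smul_mulVec]
    ext i
    simp
  calc _ ≤ ‖toLp 2 ((1 + s • B) *ᵥ u.ofLp) - u‖ := abs_norm_sub_norm_le _ _
    _ = _ := by rw [hsub, norm_smul]

end Matrix

theorem opnorm_bounds_general (n k c : ℕ)
    (M A : Matrix (Fin n) (Fin n) ℤ)
    (hMk : ∀ i j, |M i j| ≤ (k : ℤ))
    (hAcol : ∀ j i i', A i j ≠ 0 → A i' j ≠ 0 → i = i')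
    (hAbound : ∀ i j, (|A i j| : ℝ) ≤
      (n : ℝ) ^ 2 * (Real.log (2 * n * k)) ^ 2 + (Real.log c) ^ 2)
    (u : EuclideanSpace ℝ (Fin n)) (hu : ‖u‖ = 1) :
    1 - ((k : ℝ) * n ^ 4 * (Real.log (2 * n * k)) ^ 2 +
          (k : ℝ) * n ^ 2 * (Real.log c) ^ 2) / ((c : ℝ) * |(M.det : ℝ)|) ≤
      ‖(WithLp.equiv 2 (Fin n → ℝ)).symm
          (((1 : Matrix (Fin n) (Fin n) ℝ) +
              ((c : ℝ) * (M.det : ℝ))⁻¹ • ((M * A).map (Int.cast : ℤ → ℝ))).mulVec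
            ((WithLp.equiv 2 (Fin n → ℝ)) u))‖ ∧
    ‖(WithLp.equiv 2 (Fin n → ℝ)).symm
        (((1 : Matrix (Fin n) (Fin n) ℝ) +
            ((c : ℝ) * (M.det : ℝ))⁻¹ • ((M * A).map (Int.cast : ℤ → ℝ))).mulVec
          ((WithLp.equiv 2 (Fin n → ℝ)) u))‖ ≤
      1 + ((k : ℝ) * n ^ 4 * (Real.log (2 * n * k)) ^ 2 +
            (k : ℝ) * n ^ 2 * (Real.log c) ^ 2) / ((c : ℝ) * |(M.det : ℝ)|) := by
  set D : ℝ := (n : ℝ) ^ 2 * (Real.log (2 * n * k)) ^ 2 + (Real.log c) ^ 2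
  set B : Matrix (Fin n) (Fin n) ℝ := (M * A).map (Int.cast : ℤ → ℝ)
  have hB_eq : B = M.map (Int.cast : ℤ → ℝ) * A.map Int.cast :=
    Matrix.map_mul (f := Int.castRingHom ℝ)
  have hB : ∀ i j, |B i j| ≤ k * D := fun i j => by
    rw [hB_eq]
    refine abs_mul_apply_le_of_subsingleton_support _ _ i j (fun l => ?_) (fun l => hAbound l j)
      (fun l hl l' hl' => hAcol j l l' ?_ ?_) (by positivity) (by positivity)
    · rw [map_apply]
      exact_mod_cast hMk i l
    · simpa using hl
    · simpa using hl'
  have hBu : ‖toLp 2 (B *ᵥ u.ofLp)‖ ≤ n ^ 2 * (k * D) := by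
    have hsq := norm_toLp_mulVec_sq_le_of_abs_le B hB u
    rw [hu, Fintype.card_fin] at hsq
    calc ‖toLp 2 (B *ᵥ u.ofLp)‖ ≤ n * (k * D) :=
          pow_le_pow_iff_left₀ (norm_nonneg _) (by positivity) two_ne_zero |>.mp (by linarith)
      _ ≤ n ^ 2 * (k * D) := by
          gcongr
          exact_mod_cast Nat.le_self_pow two_ne_zero n
  have hperturb := abs_norm_toLp_one_add_smul_mulVec_sub_norm_le B ((c : ℝ) * M.det)⁻¹ u
  have hβ : ‖((c : ℝ) * M.det)⁻¹‖ * (n ^ 2 * (k * D)) =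
      ((k : ℝ) * n ^ 4 * (Real.log (2 * n * k)) ^ 2 + (k : ℝ) * n ^ 2 * (Real.log c) ^ 2) /
        ((c : ℝ) * |(M.det : ℝ)|) := by
    rw [Real.norm_eq_abs, abs_inv, abs_mul, Nat.abs_cast]
    ring
  rw [hu] at hperturb
  rw [← hβ, WithLp.equiv_symm_apply, WithLp.equiv_apply]
  obtain ⟨hupper, hlower⟩ :=
    abs_sub_le_iff.mp (hperturb.trans (mul_le_mul_of_nonneg_left hBu (norm_nonneg _)))
  exact ⟨by linarith, by linarith⟩

theorem opnorm_bounds (n k c : ℕ) (hn : 8 ≤ n) (hk : 1 ≤ k) (hc : 1 ≤ c)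
    (M A : Matrix (Fin n) (Fin n) ℤ) (hM : M.det ≠ 0)
    (hMk : ∀ i j, |M i j| ≤ (k : ℤ))
    (hAcol : ∀ j i i', A i j ≠ 0 → A i' j ≠ 0 → i = i')
    (hAbound : ∀ i j, (|A i j| : ℝ) ≤
      (n : ℝ) ^ 2 * (Real.log (2 * n * k)) ^ 2 + (Real.log c) ^ 2)
    (u : EuclideanSpace ℝ (Fin n)) (hu : ‖u‖ = 1) :
    1 - ((k : ℝ) * n ^ 4 * (Real.log (2 * n * k)) ^ 2 +
          (k : ℝ) * n ^ 2 * (Real.log c) ^ 2) / ((c : ℝ) * |(M.det : ℝ)|) ≤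
      ‖(WithLp.equiv 2 (Fin n → ℝ)).symm
          (((1 : Matrix (Fin n) (Fin n) ℝ) +
              ((c : ℝ) * (M.det : ℝ))⁻¹ • ((M * A).map (Int.cast : ℤ → ℝ))).mulVec
            ((WithLp.equiv 2 (Fin n → ℝ)) u))‖ ∧
    ‖(WithLp.equiv 2 (Fin n → ℝ)).symm
        (((1 : Matrix (Fin n) (Fin n) ℝ) +
            ((c : ℝ) * (M.det : ℝ))⁻¹ • ((M * A).map (Int.cast : ℤ → ℝ))).mulVec
          ((WithLp.equiv 2 (Fin n → ℝ)) u))‖ ≤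
      1 + ((k : ℝ) * n ^ 4 * (Real.log (2 * n * k)) ^ 2 +
            (k : ℝ) * n ^ 2 * (Real.log c) ^ 2) / ((c : ℝ) * |(M.det : ℝ)|) :=
  opnorm_bounds_general n k c M A hMk hAcol hAbound u hu
end

section
/- Let n ≥ 1 and d ≥ 1 be natural numbers and let x ∈ ℤⁿ be a vector whose entries are collectively coprime (their gcd is 1). Let L be the subgroup of ℤⁿ generated by the vectors d·e₁, …, d·eₙ together with x. Then the index of L in ℤⁿ equals d^(n−1). -/
/-!
Reducing modulo `d` maps `ℤⁿ` onto `(ℤ/dℤ)ⁿ` with kernel `d·ℤⁿ`, so `L` is the preimage of the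
cyclic subgroup generated by `x mod d`, and the index of `L` is the index of that subgroup. Since
`gcd x = 1`, `m • x ≡ 0 (mod d)` forces `d ∣ m`, so `x mod d` has order exactly `d` and the index
is `dⁿ / d`.
-/

open Submodule

section

variable {R M N : Type*} [Ring R] [AddCommGroup M] [Module R M] [AddCommGroup N] [Module R N]

theorem span_insert_eq_comap_span_singleton (f : M →ₗ[R] N) {S : Set M}
    (hS : span R S = LinearMap.ker f) (x : M) :
    span R (insert x S) = (R ∙ f x).comap f := by
  rw [span_insert, hS, ← comap_map_eq, map_span, Set.image_singleton]

end

theorem card_quotient_comap_span_singleton {M N : Type*} [AddCommGroup M] [AddCommGroup N]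
    {f : M →ₗ[ℤ] N} (hf : Function.Surjective f) (y : N) :
    Nat.card (M ⧸ (ℤ ∙ y).comap f) = (AddSubgroup.zmultiples y).index := by
  rw [← span_singleton_toAddSubgroup_eq_zmultiples,
    ← AddSubgroup.index_comap_of_surjective _ (f := f.toAddMonoidHom) hf]
  rfl

theorem AddSubgroup.index_zmultiples_mul_addOrderOf {G : Type*} [AddGroup G] (a : G) :
    (AddSubgroup.zmultiples a).index * addOrderOf a = Nat.card G := by
  rw [← Nat.card_zmultiples, AddSubgroup.index_mul_card]

namespace Int

variable (d : ℕ) (ι : Type*)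

def piCastZMod : (ι → ℤ) →ₗ[ℤ] ι → ZMod d :=
  (Int.castAddHom (ZMod d)).toIntLinearMap.compLeft ι

variable {d ι}

@[simp]
theorem piCastZMod_apply (v : ι → ℤ) (i : ι) : piCastZMod d ι v i = (v i : ZMod d) :=
  rfl

theorem piCastZMod_surjective : Function.Surjective (piCastZMod d ι) :=
  ZMod.intCast_surjective.comp_left

theorem piCastZMod_eq_zero_iff {v : ι → ℤ} : piCastZMod d ι v = 0 ↔ ∀ i, (d : ℤ) ∣ v i := by
  simp only [funext_iff, piCastZMod_apply, Pi.zero_apply, ZMod.intCast_zmod_eq_zero_iff_dvd]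

theorem ker_piCastZMod [Finite ι] [DecidableEq ι] :
    LinearMap.ker (piCastZMod d ι) =
      span ℤ (Set.range fun i : ι => (d : ℤ) • Pi.single i 1) := by
  have hrange : (Set.range fun i : ι => (d : ℤ) • Pi.single i 1) =
      ((d : ℤ) • LinearMap.id : (ι → ℤ) →ₗ[ℤ] ι → ℤ) '' Set.range (Pi.basisFun ℤ ι) := by
    rw [← Set.range_comp]
    simp [Function.comp_def]
  rw [hrange, span_image, (Pi.basisFun ℤ ι).span_eq, Submodule.map_top]
  ext v
  simp only [LinearMap.mem_ker, piCastZMod_eq_zero_iff, LinearMap.mem_range, LinearMap.smul_apply,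
    LinearMap.id_apply]
  constructor
  · intro h
    choose w hw using h
    exact ⟨w, funext fun i => (hw i).symm⟩
  · rintro ⟨w, rfl⟩ i
    exact ⟨w i, rfl⟩

theorem nsmul_piCastZMod_eq_zero_iff [Fintype ι] {x : ι → ℤ} (hx : Finset.univ.gcd x = 1)
    (m : ℕ) : m • piCastZMod d ι x = 0 ↔ d ∣ m := by
  rw [← map_nsmul, piCastZMod_eq_zero_iff, ← Int.natCast_dvd_natCast]
  calc (∀ i, (d : ℤ) ∣ (m • x) i) ↔ (d : ℤ) ∣ Finset.univ.gcd fun i => (m : ℤ) * x i := by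
        simp [Finset.dvd_gcd_iff]
    _ ↔ (d : ℤ) ∣ m := by
        rw [Finset.gcd_mul_left, hx, mul_one, Int.normalize_coe_nat]

theorem addOrderOf_piCastZMod [Fintype ι] {x : ι → ℤ} (hx : Finset.univ.gcd x = 1) :
    addOrderOf (piCastZMod d ι x) = d :=
  Nat.dvd_antisymm
    (addOrderOf_dvd_iff_nsmul_eq_zero.2 ((nsmul_piCastZMod_eq_zero_iff hx d).2 dvd_rfl))
    ((nsmul_piCastZMod_eq_zero_iff hx _).1 (addOrderOf_nsmul_eq_zero _))

end Int

theorem sa_lattice_index (n d : ℕ) (hn : 1 ≤ n) (hd : 1 ≤ d) (x : Fin n → ℤ)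
    (hx : Finset.univ.gcd x = 1) :
    Nat.card ((Fin n → ℤ) ⧸
        Submodule.span ℤ
          (insert x (Set.range fun i : Fin n => (d : ℤ) • Pi.single i 1))) =
      d ^ (n - 1) := by
  rw [span_insert_eq_comap_span_singleton _ Int.ker_piCastZMod.symm,
    card_quotient_comap_span_singleton Int.piCastZMod_surjective]
  have hmul := AddSubgroup.index_zmultiples_mul_addOrderOf (Int.piCastZMod d (Fin n) x)
  rw [Int.addOrderOf_piCastZMod hx, Nat.card_fun, Nat.card_zmod, Nat.card_fin,
    ← pow_sub_one_mul (by omega)] at hmul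
  exact Nat.eq_of_mul_eq_mul_right hd hmul
end

section
/- Let n ≥ 1 and d ≥ 1 be natural numbers and let x ∈ ℤⁿ be a vector whose entries are collectively coprime (their gcd is 1). Let L be the subgroup of ℤⁿ generated by the vectors d·e₁, …, d·eₙ together with x. Then there exists a nonzero vector v ∈ L with ‖v‖_∞ ≤ d^((n−1)/n), where ‖·‖_∞ denotes the supremum norm (maximum absolute value of a coordinate). -/
theorem sa_lattice_short_vector (n d : ℕ) (hn : 1 ≤ n) (hd : 1 ≤ d) (x : Fin n → ℤ)
    (hx : Finset.univ.gcd x = 1) :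
    ∃ v ∈ Submodule.span ℤ
        (insert x (Set.range fun i : Fin n => (d : ℤ) • Pi.single i 1)),
      v ≠ 0 ∧ ‖(fun i => (v i : ℝ) : Fin n → ℝ)‖ ≤ (d : ℝ) ^ (((n : ℝ) - 1) / n) := by
  classical
  haveI : NeZero d := ⟨by omega⟩
  have hn0 : (n : ℝ) ≠ 0 := by positivity
  set B : ℝ := (d : ℝ) ^ (((n : ℝ) - 1) / n) with hBdef
  have hB0 : 0 ≤ B := by positivity
  set m : ℕ := ⌊B⌋₊ with hmdef
  have hmB : (m : ℝ) ≤ B := Nat.floor_le hB0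
  have hBm1 : B < (m : ℝ) + 1 := Nat.lt_floor_add_one B
  -- key cardinality inequality
  have hBn : B ^ n = (d : ℝ) ^ (n - 1 : ℕ) := by
    rw [hBdef, ← Real.rpow_natCast ((d:ℝ) ^ (((n : ℝ) - 1) / n)) n,
      ← Real.rpow_mul (by positivity), div_mul_cancel₀ _ hn0]
    have : ((n : ℝ) - 1) = ((n - 1 : ℕ) : ℝ) := by
      rw [Nat.cast_sub hn]; simp
    rw [this, Real.rpow_natCast]
  have hcard_lt : d ^ (n - 1) < (m + 1) ^ n := by
    have h1 : ((d : ℝ)) ^ (n - 1 : ℕ) < ((m : ℝ) + 1) ^ n := by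
      rw [← hBn]
      exact pow_lt_pow_left₀ hBm1 hB0 (by omega)
    have := h1
    rw [show ((m : ℝ) + 1) = ((m + 1 : ℕ) : ℝ) by push_cast; ring] at this
    exact_mod_cast this
  -- the quotient group
  set y : Fin n → ZMod d := fun i => ((x i : ℤ) : ZMod d) with hydef
  set H : AddSubgroup (Fin n → ZMod d) := AddSubgroup.zmultiples y with hHdef
  have hord : addOrderOf y = d := by
    have hdvd1 : addOrderOf y ∣ d := by
      apply addOrderOf_dvd_of_nsmul_eq_zero
      funext i
      simp [hydef, nsmul_eq_mul]
    have hdvd2 : d ∣ addOrderOf y := by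
      set k := addOrderOf y with hk
      have hky : k • y = 0 := addOrderOf_nsmul_eq_zero y
      have hdiv : ∀ i, (d : ℤ) ∣ (k : ℤ) * x i := by
        intro i
        have := congrFun hky i
        rw [Pi.smul_apply, Pi.zero_apply] at this
        rw [← ZMod.intCast_zmod_eq_zero_iff_dvd]
        push_cast
        simpa [hydef, nsmul_eq_mul] using this
      have hgcd : (d : ℤ) ∣ Finset.univ.gcd (fun i => (k : ℤ) * x i) :=
        Finset.dvd_gcd fun i _ => hdiv i
      rw [Finset.gcd_mul_left, hx, mul_one] at hgcd
      rw [Int.normalize_of_nonneg (by positivity)] at hgcd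
      exact_mod_cast hgcd
    exact Nat.dvd_antisymm hdvd1 hdvd2
  have hcardH : Nat.card H = d := by rw [hHdef, Nat.card_zmultiples, hord]
  set Q := (Fin n → ZMod d) ⧸ H with hQdef
  haveI : Fintype Q := Fintype.ofFinite Q
  have hcardQ : Nat.card Q = d ^ (n - 1) := by
    have htot : Nat.card (Fin n → ZMod d) = d ^ n := by
      simp [Nat.card_eq_fintype_card]
    have := AddSubgroup.card_eq_card_quotient_mul_card_addSubgroup H
    rw [htot, hcardH] at this
    have hdn : d ^ n = d ^ (n - 1) * d := by
      rw [← pow_succ]; congr 1; omega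
    rw [hdn] at this
    exact (Nat.eq_of_mul_eq_mul_right (by omega) this.symm)
  -- pigeonhole
  set g : (Fin n → Fin (m + 1)) → Q :=
    fun a => QuotientAddGroup.mk (fun i => (((a i : ℕ) : ℤ) : ZMod d)) with hgdef
  have hclt : Fintype.card Q < Fintype.card (Fin n → Fin (m + 1)) := by
    rw [← Nat.card_eq_fintype_card, hcardQ]
    simpa using hcard_lt
  obtain ⟨a, b, hab, hgab⟩ := Fintype.exists_ne_map_eq_of_card_lt g hclt
  set v : Fin n → ℤ := (fun i => ((a i : ℕ) : ℤ)) - (fun i => ((b i : ℕ) : ℤ)) with hvdef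
  have hva : ∀ i, v i = ((a i : ℕ) : ℤ) - ((b i : ℕ) : ℤ) := fun i => rfl
  -- v is congruent to a multiple of x mod d
  have hmem' : (fun i => (((a i : ℕ) : ℤ) : ZMod d)) - (fun i => (((b i : ℕ) : ℤ) : ZMod d)) ∈ H := by
    have := (QuotientAddGroup.eq (s := H)).mp hgab
    have h2 : -(fun i => (((a i : ℕ) : ℤ) : ZMod d)) + (fun i => (((b i : ℕ) : ℤ) : ZMod d)) ∈ H := this
    have := H.neg_mem h2
    simpa [neg_add_rev, sub_eq_add_neg, add_comm] using this
  obtain ⟨c, hc⟩ := AddSubgroup.mem_zmultiples_iff.mp hmem'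
  have hdivd : ∀ i, (d : ℤ) ∣ v i - c * x i := by
    intro i
    rw [← ZMod.intCast_zmod_eq_zero_iff_dvd]
    push_cast
    have := congrFun hc i
    rw [Pi.smul_apply, Pi.sub_apply] at this
    have h2 : (c : ZMod d) * ((x i : ℤ) : ZMod d) = (((a i : ℕ) : ℤ) : ZMod d) - (((b i : ℕ) : ℤ) : ZMod d) := by
      simpa [hydef, zsmul_eq_mul] using this
    rw [hva i]
    push_cast
    push_cast at h2
    rw [← h2]
    ring
  set w : Fin n → ℤ := fun i => (v i - c * x i) / d with hwdef
  have hvw : ∀ i, v i = c * x i + d * w i := by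
    intro i
    have h := Int.mul_ediv_cancel' (hdivd i)
    show v i = c * x i + (d : ℤ) * ((v i - c * x i) / d)
    rw [h]; ring
  refine ⟨v, ?_, ?_, ?_⟩
  · have hxmem : x ∈ Submodule.span ℤ
        (insert x (Set.range fun i : Fin n => (d : ℤ) • Pi.single i 1)) :=
      Submodule.subset_span (Set.mem_insert _ _)
    have hemem : ∀ i : Fin n, ((d : ℤ) • Pi.single i 1 : Fin n → ℤ) ∈ Submodule.span ℤ
        (insert x (Set.range fun i : Fin n => (d : ℤ) • Pi.single i 1)) :=
      fun i => Submodule.subset_span (Set.mem_insert_iff.mpr (Or.inr ⟨i, rfl⟩))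
    have hveq : v = c • x + ∑ i, w i • ((d : ℤ) • (Pi.single i 1 : Fin n → ℤ)) := by
      funext j
      rw [Pi.add_apply, Finset.sum_apply]
      have hsum : ∑ i, (w i • ((d : ℤ) • (Pi.single i 1 : Fin n → ℤ))) j = d * w j := by
        rw [Finset.sum_eq_single j]
        · simp [mul_comm]
        · intro i _ hij
          simp [Pi.single_apply, hij]
        · simp
      rw [hsum, Pi.smul_apply, smul_eq_mul, hvw j]
    rw [hveq]
    exact Submodule.add_mem _ (Submodule.smul_mem _ c hxmem)
      (Submodule.sum_mem _ fun i _ => Submodule.smul_mem _ _ (hemem i))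
  · intro h
    apply hab
    funext i
    have := congrFun h i
    rw [hva i] at this
    simp only [Pi.zero_apply] at this
    have : (a i : ℕ) = (b i : ℕ) := by omega
    exact Fin.ext this
  · rw [pi_norm_le_iff_of_nonneg hB0]
    intro i
    have hai : (a i : ℕ) ≤ m := by omega
    have hbi : (b i : ℕ) ≤ m := by omega
    have habs : |v i| ≤ (m : ℤ) := by
      rw [hva i, abs_le]
      constructor <;> [skip; skip] <;> omega
    have : ‖((v i : ℤ) : ℝ)‖ ≤ (m : ℝ) := by
      rw [Real.norm_eq_abs, ← Int.cast_abs]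
      exact_mod_cast habs
    exact this.trans hmB
end
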